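/- Straight-line solutions for concave homogeneous potentials: let φ : ℝ^m → ℝ be concave (−φ is convex) and positively homogeneous of degree 1 (φ(λX) = λφ(X) for all λ ≥ 0 and X ∈ ℝ^m), let h : ℝ^m → ℝ be differentiable, and let P₀ ∈ D_0(φ) satisfy h(P₀) ≤ h(P) for all P ∈ D_0(φ). Set X(t) = t·∇h(P₀) for t ≥ 0. Then for every t ≥ 0: D_{X(t)}(φ) ⊆ D_0(φ), P₀ ∈ D_{X(t)}(φ), and h(P₀) ≤ h(P) for all P ∈ D_{X(t)}(φ); in particular P₀ is a minimizer of h over D_{X(t)}(φ), so the trajectory X solves the gradient differential equation X⁺(t) = ∇h(P₀). -/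

import Mathlib

open Filter Topology RealInnerProductSpace

noncomputable section

/-- The quadratic form `Z ↦ ⟪E Z, Z⟫ / 2` associated with a linear operator `E` on `ℝ^m`. -/
def quadForm {m : ℕ} (Eop : EuclideanSpace ℝ (Fin m) →L[ℝ] EuclideanSpace ℝ (Fin m))
    (Z : EuclideanSpace ℝ (Fin m)) : ℝ :=
  ⟪Eop Z, Z⟫ / 2

/-- The super-differential of `φ` at `X` relative to the quadratic form `e`:
`D_X(φ) = { P : φ(Y) ≤ φ(X) + ⟪P, Y − X⟫ + e(Y − X) for all Y }`. -/
def superDiff {m : ℕ} (e φ : EuclideanSpace ℝ (Fin m) → ℝ)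
    (X : EuclideanSpace ℝ (Fin m)) : Set (EuclideanSpace ℝ (Fin m)) :=
  {P | ∀ Y, φ Y ≤ φ X + ⟪P, Y - X⟫ + e (Y - X)}

/-- The Hamiltonian `h(P) = ⟪q₀, P⟫ + ⟪A P, P⟫ / 2`, the sum of a linear form and a
quadratic form. -/
def quadHam {m : ℕ} (q₀ : EuclideanSpace ℝ (Fin m))
    (A : EuclideanSpace ℝ (Fin m) →L[ℝ] EuclideanSpace ℝ (Fin m))
    (P : EuclideanSpace ℝ (Fin m)) : ℝ :=
  ⟪q₀, P⟫ + ⟪A P, P⟫ / 2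

/-- `X : [0,∞) → ℝ^m` solves the gradient differential equation `X⁺(t) = ∇h(φ)(X(t))` for the
Hamiltonian `h = quadHam q₀ A`: at every `t ≥ 0` the Hamiltonian attains its minimum over the
super-differential `D_{X(t)}(φ)`, and for every minimizer `P` the one-way derivative `X⁺(t)`
exists and equals `h'(P) = q₀ + A P`. -/
def SolvesGradODE {m : ℕ} (e φ : EuclideanSpace ℝ (Fin m) → ℝ)
    (q₀ : EuclideanSpace ℝ (Fin m))
    (A : EuclideanSpace ℝ (Fin m) →L[ℝ] EuclideanSpace ℝ (Fin m))
    (X : ℝ → EuclideanSpace ℝ (Fin m)) : Prop :=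
  ∀ t, 0 ≤ t →
    (∃ P ∈ superDiff e φ (X t), ∀ P' ∈ superDiff e φ (X t),
        quadHam q₀ A P ≤ quadHam q₀ A P') ∧
    ∀ P ∈ superDiff e φ (X t), (∀ P' ∈ superDiff e φ (X t),
        quadHam q₀ A P ≤ quadHam q₀ A P') →
      Tendsto (fun lam : ℝ => lam⁻¹ • (X (t + lam) - X t)) (𝓝[>] 0) (𝓝 (q₀ + A P))

/-!
Homogeneity forces every supergradient `P ∈ D_X(φ)` to satisfy `⟪P, X⟫ = φ X` and
`φ ≤ ⟪P, ·⟫`, so `D_X(φ)` is the face of the convex set `K = D_0(φ)` on which `⟪·, X⟫`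
attains its minimum `φ X`. For `X = t • ∇h(P₀)` the first-order optimality condition of `P₀` on
`K` says precisely that `⟪·, ∇h(P₀)⟫` is minimised over `K` at `P₀`; concavity supplies a
supergradient at `∇h(P₀)`, which identifies that minimum with `φ(∇h(P₀))`.
-/

open Set

theorem ConcaveOn.exists_strongDual_le_add {E : Type*} [NormedAddCommGroup E] [NormedSpace ℝ E]
    [FiniteDimensional ℝ E] {φ : E → ℝ} (hφ : ConcaveOn ℝ univ φ) (x : E) :
    ∃ ℓ : StrongDual ℝ E, ∀ y, φ y ≤ φ x + ℓ (y - x) := by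
  have hcont : Continuous φ := continuousOn_univ.mp (hφ.continuousOn isOpen_univ)
  have hopen : IsOpen {p : E × ℝ | p.1 ∈ univ ∧ p.2 < φ p.1} := by
    simpa using isOpen_lt continuous_snd (hcont.comp continuous_fst)
  obtain ⟨f, hf⟩ := geometric_hahn_banach_open_point hφ.convex_strict_hypograph hopen
    (x := (x, φ x)) (by simp)
  set L : StrongDual ℝ E := f.comp (ContinuousLinearMap.inl ℝ E ℝ)
  set a : ℝ := f (0, 1)
  have hf_apply : ∀ y s, f (y, s) = L y + s * a := by
    intro y s
    rw [show ((y, s) : E × ℝ) = (y, 0) + s • (0, 1) by simp, map_add, map_smul]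
    simp [L, a]
  have hsep : ∀ y s, s < φ y → L y + s * a < L x + φ x * a := by
    intro y s hs
    simpa only [hf_apply] using hf (y, s) ⟨mem_univ y, hs⟩
  have ha : 0 < a := by nlinarith [hsep x (φ x - 1) (by linarith)]
  refine ⟨-a⁻¹ • L, fun y => ?_⟩
  have hy : φ y ≤ (L x + φ x * a - L y) / a :=
    le_of_forall_lt fun s hs => by rw [lt_div_iff₀ ha]; linarith [hsep y s hs]
  have hℓ : (-a⁻¹ • L) (y - x) = (L x - L y) / a := by
    simp only [FunLike.coe_smul, Pi.smul_apply, map_sub, smul_eq_mul]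
    field_simp
    ring
  rw [hℓ]
  calc φ y ≤ (L x + φ x * a - L y) / a := hy
    _ = φ x + (L x - L y) / a := by field_simp; ring

theorem IsMinOn.inner_gradient_sub_nonneg {E : Type*} [NormedAddCommGroup E]
    [InnerProductSpace ℝ E] [CompleteSpace E] {h : E → ℝ} {K : Set E} {P₀ P : E}
    (hK : Convex ℝ K) (hP₀ : P₀ ∈ K) (hmin : IsMinOn h K P₀) (hh : DifferentiableAt ℝ h P₀)
    (hP : P ∈ K) : 0 ≤ ⟪gradient h P₀, P - P₀⟫ := by
  simpa using hmin.localize.hasFDerivWithinAt_nonneg hh.hasGradientAt.hasFDerivAt.hasFDerivWithinAt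
    (sub_mem_posTangentConeAt_of_segment_subset (hK.segment_subset hP₀ hP))

section SuperDiff

variable {m : ℕ} {φ : EuclideanSpace ℝ (Fin m) → ℝ} {P X : EuclideanSpace ℝ (Fin m)}

theorem convex_superDiff (e : EuclideanSpace ℝ (Fin m) → ℝ) (X : EuclideanSpace ℝ (Fin m)) :
    Convex ℝ (superDiff e φ X) := by
  have : superDiff e φ X = ⋂ Y, {P | φ Y - φ X - e (Y - X) ≤ ⟪P, Y - X⟫} := by
    ext P
    simp only [superDiff, mem_ofPred_eq, mem_iInter]
    exact forall_congr' fun Y => by constructor <;> intro h <;> linarith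
  rw [this]
  exact convex_iInter fun Y => convex_halfSpace_ge (innerₛₗ ℝ |>.flip (Y - X)).isLinear _

theorem exists_mem_superDiff (hconc : ConvexOn ℝ univ (fun X => -φ X))
    (X : EuclideanSpace ℝ (Fin m)) : ∃ P, P ∈ superDiff (fun _ => 0) φ X := by
  obtain ⟨ℓ, hℓ⟩ := (neg_convexOn_iff.mp hconc).exists_strongDual_le_add X
  refine ⟨(InnerProductSpace.toDual ℝ _).symm ℓ, fun Y => ?_⟩
  simpa using hℓ Y

theorem mem_superDiff_of_inner_sub_le {Z : EuclideanSpace ℝ (Fin m)}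
    (hP : P ∈ superDiff (fun _ => 0) φ Z) (hX : ⟪P, X - Z⟫ ≤ φ X - φ Z) :
    P ∈ superDiff (fun _ => 0) φ X := by
  intro Y
  have hY := hP Y
  have hsplit : ⟪P, Y - Z⟫ = ⟪P, X - Z⟫ + ⟪P, Y - X⟫ := by
    rw [← inner_add_right, sub_add_sub_cancel']
  simp only [add_zero] at hY ⊢
  linarith

variable (hhom : ∀ c : ℝ, 0 ≤ c → ∀ X, φ (c • X) = c * φ X)
include hhom

theorem apply_zero_eq_zero : φ 0 = 0 := by simpa using hhom 0 le_rfl 0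

theorem inner_eq_of_mem_superDiff (hP : P ∈ superDiff (fun _ => 0) φ X) : ⟪P, X⟫ = φ X := by
  have h2X := hP ((2 : ℝ) • X)
  have hX0 := hP 0
  rw [hhom 2 zero_le_two, show (2 : ℝ) • X - X = X by module] at h2X
  rw [apply_zero_eq_zero hhom, zero_sub, inner_neg_right] at hX0
  simp only [add_zero] at h2X hX0
  linarith

theorem superDiff_subset_superDiff_zero (X : EuclideanSpace ℝ (Fin m)) :
    superDiff (fun _ => 0) φ X ⊆ superDiff (fun _ => 0) φ 0 := fun P hP =>
  mem_superDiff_of_inner_sub_le hP <| by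
    rw [zero_sub, inner_neg_right, inner_eq_of_mem_superDiff hhom hP, apply_zero_eq_zero hhom]
    linarith

theorem mem_superDiff_smul_of_inner_le (hP : P ∈ superDiff (fun _ => 0) φ 0)
    (hX : ⟪P, X⟫ ≤ φ X) {t : ℝ} (ht : 0 ≤ t) : P ∈ superDiff (fun _ => 0) φ (t • X) :=
  mem_superDiff_of_inner_sub_le hP <| by
    rw [sub_zero, hhom t ht, apply_zero_eq_zero hhom, sub_zero, real_inner_smul_right]
    exact mul_le_mul_of_nonneg_left hX ht

end SuperDiff

/-- **Straight-line solutions for concave homogeneous potentials.** Let `φ` be concave and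
positively homogeneous of degree `1`, `h` differentiable, and `P₀` a minimizer of `h` over the
super-differential `D_0(φ)` (relative to `e = 0`). With `X(t) = t • ∇h(P₀)`, for every `t ≥ 0`
one has `D_{X(t)}(φ) ⊆ D_0(φ)`, `P₀ ∈ D_{X(t)}(φ)`, `P₀` minimizes `h` over `D_{X(t)}(φ)`,
and the one-way derivative of `X` at `t` exists and equals `∇h(P₀)`. -/
theorem straight_line_solution_concave_homogeneous {m : ℕ}
    (φ : EuclideanSpace ℝ (Fin m) → ℝ)
    (hconc : ConvexOn ℝ Set.univ (fun X => -φ X))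
    (hhom : ∀ c : ℝ, 0 ≤ c → ∀ X, φ (c • X) = c * φ X)
    (h : EuclideanSpace ℝ (Fin m) → ℝ) (hh_diff : Differentiable ℝ h)
    (P₀ : EuclideanSpace ℝ (Fin m))
    (hP₀ : P₀ ∈ superDiff (fun _ => 0) φ 0)
    (hmin : ∀ P ∈ superDiff (fun _ => 0) φ 0, h P₀ ≤ h P) :
    ∀ t : ℝ, 0 ≤ t →
      superDiff (fun _ => 0) φ (t • gradient h P₀) ⊆ superDiff (fun _ => 0) φ 0 ∧
      P₀ ∈ superDiff (fun _ => 0) φ (t • gradient h P₀) ∧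
      (∀ P ∈ superDiff (fun _ => 0) φ (t • gradient h P₀), h P₀ ≤ h P) ∧
      Tendsto (fun lam : ℝ => lam⁻¹ • ((t + lam) • gradient h P₀ - t • gradient h P₀))
        (𝓝[>] 0) (𝓝 (gradient h P₀)) := by
  intro t ht
  set g := gradient h P₀
  have hsub := superDiff_subset_superDiff_zero hhom (t • g)
  refine ⟨hsub, ?_, fun P hP => hmin P (hsub hP), ?_⟩
  · obtain ⟨Pg, hPg⟩ := exists_mem_superDiff hconc g
    have hopt : 0 ≤ ⟪g, Pg - P₀⟫ := IsMinOn.inner_gradient_sub_nonneg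
      (convex_superDiff _ 0) hP₀ hmin (hh_diff P₀) (superDiff_subset_superDiff_zero hhom g hPg)
    have hP₀g : ⟪P₀, g⟫ ≤ φ g := by
      rw [inner_sub_right, real_inner_comm Pg, real_inner_comm P₀,
        inner_eq_of_mem_superDiff hhom hPg] at hopt
      linarith
    exact mem_superDiff_smul_of_inner_le hhom hP₀ hP₀g ht
  · refine tendsto_const_nhds.congr' ?_
    filter_upwards [self_mem_nhdsWithin] with lam (hlam : 0 < lam)
    rw [← sub_smul, add_sub_cancel_left, smul_smul, inv_mul_cancel₀ hlam.ne', one_smul]
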